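/- In the setting of Theorem (quantum Chamber Ansatz): assuming (Φ_𝐢 ∘ η_{w,q}^{-1})([D_{w_{≤j}ϖ_{i_j}, ϖ_{i_j}}]) = (∏_{m=1}^{j} q_{i_m}^{d_m^{(j)}(d_m^{(j)}+1)/2}) t_1^{-d_1^{(j)}}⋯t_j^{-d_j^{(j)}} with d_m^{(j)} = ⟨w_{≤m}h_{i_m}, w_{≤j}ϖ_{i_j}⟩ for all j ≤ k, the variable t_k is recovered up to a power of q as t_k ≃ (D'_{w_{≤k-1}ϖ_{i_k},ϖ_{i_k}})^{-1}(D'_{w_{≤k}ϖ_{i_k},ϖ_{i_k}})^{-1} ∏_{j ≠ i_k}(D'_{w_{≤k}ϖ_j,ϖ_j})^{-a_{j,i_k}}, where D' denotes the corresponding monomial; i.e., the product of those Laurent monomials in t_1,…,t_ℓ equals t_k up to a power of q. -/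

import Mathlib

/-- Simple reflection on the weight lattice: `s_i(μ) = μ - ⟨h_i, μ⟩ α_i`. -/
def sRef {I P Pc : Type*} [AddCommGroup P] [AddCommGroup Pc]
    (pair : Pc →+ P →+ ℤ) (α : I → P) (hc : I → Pc) (i : I) (μ : P) : P :=
  μ - pair (hc i) μ • α i

/-- Simple reflection on the coweight lattice: `s_i(x) = x - ⟨x, α_i⟩ h_i`. -/
def sRefC {I P Pc : Type*} [AddCommGroup P] [AddCommGroup Pc]
    (pair : Pc →+ P →+ ℤ) (α : I → P) (hc : I → Pc) (i : I) (x : Pc) : Pc :=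
  x - pair x (α i) • hc i

/-- `w_{≤m} = s_{i_1}⋯s_{i_m}` acting on weights (word `idx` indexed from 1). -/
def wle {I P Pc : Type*} [AddCommGroup P] [AddCommGroup Pc]
    (pair : Pc →+ P →+ ℤ) (α : I → P) (hc : I → Pc) (idx : ℕ → I) : ℕ → P → P
  | 0 => id
  | m + 1 => (wle pair α hc idx m) ∘ sRef pair α hc (idx (m + 1))

/-- `w_{≤m} = s_{i_1}⋯s_{i_m}` acting on coweights. -/
def wleC {I P Pc : Type*} [AddCommGroup P] [AddCommGroup Pc]
    (pair : Pc →+ P →+ ℤ) (α : I → P) (hc : I → Pc) (idx : ℕ → I) : ℕ → Pc → Pc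
  | 0 => id
  | m + 1 => (wleC pair α hc idx m) ∘ sRefC pair α hc (idx (m + 1))

/-- The Laurent monomial `D'_{w_{≤k'}μ} = t_1^{-d_1}⋯t_{k'}^{-d_{k'}}` with
`d_m = ⟨w_{≤m} h_{i_m}, w_{≤k'} μ⟩`, as a unit in the quantum torus. -/
def Mmon {I P Pc A : Type*} [AddCommGroup P] [AddCommGroup Pc] [Ring A]
    (pair : Pc →+ P →+ ℤ) (α : I → P) (hc : I → Pc) (idx : ℕ → I) (t : ℕ → Aˣ)
    (k' : ℕ) (μ : P) : Aˣ :=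
  ((List.range k').map fun m =>
    t (m + 1) ^
      (-(pair (wleC pair α hc idx (m + 1) (hc (idx (m + 1))))
          (wle pair α hc idx k' μ)))).prod

/-!
Modulo the central subgroup generated by `q` the variables `t_1, …, t_ℓ` commute, so it suffices
to compare exponents of `t_m` in a commutative group. Since `w_{≤k} = w_{≤k-1} s_{i_k}` and
`s_{i_k} ϖ_j = ϖ_j` for `j ≠ i_k`, the total exponent of `t_m` is `⟨w_{≤m} h_{i_m}, w_{≤k-1} λ⟩`
with `λ = ϖ_{i_k} + s_{i_k} ϖ_{i_k} + ∑_{j ≠ i_k} a_{j,i_k} ϖ_j = 0`, for every `m < k`. The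
monomial `D'_{w_{≤k-1} ϖ_{i_k}}` does not involve `t_k`, and the exponent of `t_k` in the other
factors is `⟨h_{i_k}, ϖ_{i_k}⟩ = 1` by invariance of the pairing under the reflections.
-/

open Finset

theorem Finset.prod_zpow_eq_zpow_sum {ι H : Type*} [CommGroup H] (s : Finset ι) (c : ι → ℤ)
    (a : H) : ∏ j ∈ s, a ^ c j = a ^ ∑ j ∈ s, c j := by
  induction s using Finset.cons_induction <;> simp [zpow_add, *]

theorem prod_zpow_neg_inv_mul_prod_zpow_neg_inv_mul_prod_zpow {ι κ H : Type*} [CommGroup H]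
    (s : Finset ι) (S : Finset κ) (v : ι → H) (x y : ι → ℤ) (z : κ → ι → ℤ) (a : κ → ℤ) :
    (∏ m ∈ s, v m ^ (-x m))⁻¹ * (∏ m ∈ s, v m ^ (-y m))⁻¹ *
        ∏ j ∈ S, (∏ m ∈ s, v m ^ (-z j m)) ^ (-a j) =
      ∏ m ∈ s, v m ^ (x m + y m + ∑ j ∈ S, a j * z j m) := by
  simp only [← prod_inv_distrib, ← prod_zpow, ← zpow_neg, ← zpow_mul, neg_neg, neg_mul_neg]
  rw [prod_comm, ← prod_mul_distrib, ← prod_mul_distrib]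
  refine prod_congr rfl fun m _ => ?_
  simp only [prod_zpow_eq_zpow_sum, ← zpow_add, mul_comm]

theorem Subgroup.normal_zpowers_of_mem_center {U : Type*} [Group U] {q : U}
    (hq : q ∈ Subgroup.center U) : (Subgroup.zpowers q).Normal :=
  ⟨fun _ hn g => by
    obtain ⟨w, rfl⟩ := Subgroup.mem_zpowers_iff.mp hn
    rwa [((Subgroup.mem_center_iff.mp (Subgroup.zpow_mem _ hq w)) g), mul_inv_cancel_right]⟩

theorem exists_zpow_mul_of_mk_eq {U : Type*} [Group U] {q : U} [(Subgroup.zpowers q).Normal]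
    (hq : q ∈ Subgroup.center U) {x y : U}
    (h : QuotientGroup.mk' (Subgroup.zpowers q) x = QuotientGroup.mk' (Subgroup.zpowers q) y) :
    ∃ N : ℤ, x = q ^ N * y := by
  obtain ⟨w, hw⟩ := Subgroup.mem_zpowers_iff.mp (QuotientGroup.eq.mp h)
  refine ⟨-w, ?_⟩
  rw [← Subgroup.mem_center_iff.mp (Subgroup.zpow_mem _ hq _) y, zpow_neg, hw, mul_inv_rev,
    inv_inv, mul_inv_cancel_left]

theorem commute_mk'_of_mul_eq_zpow_mul {U : Type*} [Group U] {q : U} [(Subgroup.zpowers q).Normal]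
    {x y : U} {n : ℤ} (h : x * y = q ^ n * (y * x)) :
    Commute (QuotientGroup.mk' (Subgroup.zpowers q) x)
      (QuotientGroup.mk' (Subgroup.zpowers q) y) := by
  have hq : QuotientGroup.mk' (Subgroup.zpowers q) q = 1 :=
    (QuotientGroup.eq_one_iff q).mpr (Subgroup.mem_zpowers q)
  rw [Commute, SemiconjBy, ← map_mul, h, map_mul, map_zpow, hq, one_zpow, one_mul, map_mul]

universe u in
theorem exists_commGroup_lift {G : Type u} [Group G] (u : ℕ → G) (S : Set ℕ)
    (hu : S.Pairwise fun a b => Commute (u a) (u b)) :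
    ∃ (H : Type u) (_ : CommGroup H) (ψ : H →* G) (v : ℕ → H), ∀ m ∈ S, ψ (v m) = u m := by
  classical
  let K := Subgroup.closure (u '' S)
  have hK : IsMulCommutative K := Subgroup.isMulCommutative_closure <| by
    rintro _ ⟨a, ha, rfl⟩ _ ⟨b, hb, rfl⟩
    rcases eq_or_ne a b with rfl | hab
    · rfl
    · exact hu ha hb hab
  open scoped IsMulCommutative in
  refine ⟨K, inferInstance, K.subtype,
    fun m => if h : m ∈ S then ⟨u m, Subgroup.subset_closure ⟨m, h, rfl⟩⟩ else 1,
    fun m hm => by simp [hm]⟩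

section Weyl

variable {I P Pc : Type*} [AddCommGroup P] [AddCommGroup Pc]
  (pair : Pc →+ P →+ ℤ) (α : I → P) (hc : I → Pc) (idx : ℕ → I)

def sRefHom (i : I) : P →+ P :=
  AddMonoidHom.mk' (sRef pair α hc i) fun μ ν => by
    simp only [sRef, map_add, add_smul]
    abel

def wleHom : ℕ → P →+ P
  | 0 => AddMonoidHom.id P
  | m + 1 => (wleHom m).comp (sRefHom pair α hc (idx (m + 1)))

theorem coe_wleHom : ∀ m, ⇑(wleHom pair α hc idx m) = wle pair α hc idx m
  | 0 => rfl
  | m + 1 => by rw [wleHom, AddMonoidHom.coe_comp, coe_wleHom m]; rfl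

/-- The exponent `d_m^{(k')} = ⟨w_{≤m} h_{i_m}, w_{≤k'} μ⟩` of `t_m` in `D'_{w_{≤k'}μ}`. -/
def chamberExponent (k' : ℕ) (μ : P) (m : ℕ) : ℤ :=
  pair (wleC pair α hc idx m (hc (idx m))) (wle pair α hc idx k' μ)

theorem chamberExponent_succ (k : ℕ) (μ : P) (m : ℕ) :
    chamberExponent pair α hc idx (k + 1) μ m =
      chamberExponent pair α hc idx k (sRef pair α hc (idx (k + 1)) μ) m :=
  rfl

theorem chamberExponent_eq_pair_comp_wleHom (k : ℕ) (μ : P) (m : ℕ) :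
    chamberExponent pair α hc idx k μ m =
      (pair (wleC pair α hc idx m (hc (idx m)))).comp (wleHom pair α hc idx k) μ := by
  rw [AddMonoidHom.comp_apply, coe_wleHom]
  rfl

theorem map_Mmon {A G H : Type*} [Ring A] [Group G] [CommGroup H] (φ : Aˣ →* G) (ψ : H →* G)
    (t : ℕ → Aˣ) (v : ℕ → H) (k : ℕ) (hv : ∀ m, 1 ≤ m → m ≤ k → ψ (v m) = φ (t m)) (μ : P) :
    φ (Mmon pair α hc idx t k μ) =
      ψ (∏ m ∈ range k, v (m + 1) ^ (-chamberExponent pair α hc idx k μ (m + 1))) := by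
  rw [Mmon, map_list_prod, prod_eq_multiset_prod, range_val, ← Multiset.coe_range,
    Multiset.map_coe, Multiset.prod_coe, map_list_prod, List.map_map, List.map_map]
  refine congrArg List.prod (List.map_congr_left fun m hm => ?_)
  simp only [Function.comp_apply, map_zpow, hv (m + 1) m.succ_pos (List.mem_range.mp hm)]
  rfl

variable {pair α hc}

theorem pair_wleC_wle
    (hinv : ∀ i x μ, pair (sRefC pair α hc i x) (sRef pair α hc i μ) = pair x μ) :
    ∀ m x μ, pair (wleC pair α hc idx m x) (wle pair α hc idx m μ) = pair x μ
  | 0, _, _ => rfl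
  | m + 1, x, μ => (pair_wleC_wle hinv m _ _).trans (hinv _ x μ)

theorem chamberExponent_self
    (hinv : ∀ i x μ, pair (sRefC pair α hc i x) (sRef pair α hc i μ) = pair x μ)
    (m : ℕ) (μ : P) : chamberExponent pair α hc idx m μ m = pair (hc (idx m)) μ :=
  pair_wleC_wle idx hinv m _ μ

end Weyl

section FundamentalWeights

variable {I P Pc : Type*} [DecidableEq I] [AddCommGroup P] [AddCommGroup Pc]
  {pair : Pc →+ P →+ ℤ} {α ϖ : I → P} {hc : I → Pc}

theorem sRef_fundamentalWeight (hϖ : ∀ i j, pair (hc i) (ϖ j) = if i = j then 1 else 0)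
    (i j : I) : sRef pair α hc i (ϖ j) = if i = j then ϖ j - α i else ϖ j := by
  split_ifs with h <;> simp [sRef, hϖ, h]

/-- The left side is `(2 - a_{ii}) ϖ_i`, because `s_i ϖ_j = ϖ_j` for `j ≠ i` and
`α_i = ∑_j a_{ji} ϖ_j`. -/
theorem add_sRef_add_sum_sRef_eq_zero [Fintype I] (haii : ∀ i, pair (hc i) (α i) = 2)
    (hϖ : ∀ i j, pair (hc i) (ϖ j) = if i = j then 1 else 0)
    (hα : ∀ i', α i' = ∑ j : I, pair (hc j) (α i') • ϖ j) (i : I) :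
    ϖ i + sRef pair α hc i (ϖ i) +
      ∑ j ∈ univ.erase i, pair (hc j) (α i) • sRef pair α hc i (ϖ j) = 0 := by
  have hroot := hα i
  rw [← add_sum_erase _ _ (mem_univ i), haii] at hroot
  rw [sum_congr rfl fun j hj => by rw [sRef_fundamentalWeight hϖ, if_neg (ne_of_mem_erase hj).symm],
    sRef_fundamentalWeight hϖ, if_pos rfl]
  rw [eq_sub_of_add_eq' hroot.symm]
  abel

end FundamentalWeights

section ChamberExponents

variable {I P Pc : Type*} [Fintype I] [DecidableEq I] [AddCommGroup P] [AddCommGroup Pc]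
  {pair : Pc →+ P →+ ℤ} {α ϖ : I → P} {hc : I → Pc} (idx : ℕ → I)

theorem chamberExponent_add_add_sum_eq_zero (haii : ∀ i, pair (hc i) (α i) = 2)
    (hϖ : ∀ i j, pair (hc i) (ϖ j) = if i = j then 1 else 0)
    (hα : ∀ i', α i' = ∑ j : I, pair (hc j) (α i') • ϖ j) (k m : ℕ) :
    chamberExponent pair α hc idx k (ϖ (idx (k + 1))) m +
        chamberExponent pair α hc idx (k + 1) (ϖ (idx (k + 1))) m +
        ∑ j ∈ univ.erase (idx (k + 1)),
          pair (hc j) (α (idx (k + 1))) * chamberExponent pair α hc idx (k + 1) (ϖ j) m = 0 := by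
  simp only [chamberExponent_succ, chamberExponent_eq_pair_comp_wleHom, ← smul_eq_mul,
    ← map_zsmul, ← map_sum, ← map_add, add_sRef_add_sum_sRef_eq_zero haii hϖ hα, map_zero]

theorem chamberExponent_self_add_sum_eq_one
    (hinv : ∀ i x μ, pair (sRefC pair α hc i x) (sRef pair α hc i μ) = pair x μ)
    (hϖ : ∀ i j, pair (hc i) (ϖ j) = if i = j then 1 else 0) (m : ℕ) (c : I → ℤ) :
    chamberExponent pair α hc idx m (ϖ (idx m)) m +
        ∑ j ∈ univ.erase (idx m), c j * chamberExponent pair α hc idx m (ϖ j) m = 1 := by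
  rw [sum_eq_zero fun j hj => ?_, chamberExponent_self idx hinv, hϖ, if_pos rfl, add_zero]
  rw [chamberExponent_self idx hinv, hϖ, if_neg (ne_of_mem_erase hj).symm, mul_zero]

theorem chamber_ansatz_recovery_of_commGroup {H : Type*} [CommGroup H]
    (hinv : ∀ i x μ, pair (sRefC pair α hc i x) (sRef pair α hc i μ) = pair x μ)
    (haii : ∀ i, pair (hc i) (α i) = 2)
    (hϖ : ∀ i j, pair (hc i) (ϖ j) = if i = j then 1 else 0)
    (hα : ∀ i', α i' = ∑ j : I, pair (hc j) (α i') • ϖ j) (v : ℕ → H) (k : ℕ) :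
    (∏ m ∈ range k, v (m + 1) ^ (-chamberExponent pair α hc idx k (ϖ (idx (k + 1))) (m + 1)))⁻¹ *
        (∏ m ∈ range (k + 1),
          v (m + 1) ^ (-chamberExponent pair α hc idx (k + 1) (ϖ (idx (k + 1))) (m + 1)))⁻¹ *
        ∏ j ∈ univ.erase (idx (k + 1)),
          (∏ m ∈ range (k + 1),
            v (m + 1) ^ (-chamberExponent pair α hc idx (k + 1) (ϖ j) (m + 1))) ^
              (-pair (hc j) (α (idx (k + 1)))) =
      v (k + 1) := by
  set d := chamberExponent pair α hc idx
  have hpad : ∏ m ∈ range k, v (m + 1) ^ (-d k (ϖ (idx (k + 1))) (m + 1)) =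
      ∏ m ∈ range (k + 1),
        v (m + 1) ^ (-if m < k then d k (ϖ (idx (k + 1))) (m + 1) else 0) := by
    rw [prod_range_succ, if_neg (lt_irrefl k), neg_zero, zpow_zero, mul_one]
    exact prod_congr rfl fun m hm => by rw [if_pos (mem_range.mp hm)]
  rw [hpad, prod_zpow_neg_inv_mul_prod_zpow_neg_inv_mul_prod_zpow, prod_range_succ,
    if_neg (lt_irrefl k), zero_add, chamberExponent_self_add_sum_eq_one idx hinv hϖ, zpow_one,
    prod_eq_one fun m hm => ?_, one_mul]
  rw [if_pos (mem_range.mp hm), chamberExponent_add_add_sum_eq_zero idx haii hϖ hα, zpow_zero]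

end ChamberExponents

/-- Quantum Chamber Ansatz: the variable `t_k` is recovered, up to a power of `q`, as
`t_k ≃ (D'_{w_{≤k-1}ϖ_{i_k}})^{-1}(D'_{w_{≤k}ϖ_{i_k}})^{-1}
  ∏_{j ≠ i_k}(D'_{w_{≤k}ϖ_j})^{-a_{j,i_k}}`. -/
theorem chamber_ansatz_recovery {I P Pc A : Type*} [Fintype I] [DecidableEq I]
    [AddCommGroup P] [AddCommGroup Pc] [Ring A]
    (pair : Pc →+ P →+ ℤ) (α ϖ : I → P) (hc : I → Pc)
    (hinv : ∀ i (x : Pc) (μ : P),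
      pair (sRefC pair α hc i x) (sRef pair α hc i μ) = pair x μ)
    (haii : ∀ i, pair (hc i) (α i) = 2)
    (hϖ : ∀ i j, pair (hc i) (ϖ j) = if i = j then 1 else 0)
    (hα : ∀ i', α i' = ∑ j : I, pair (hc j) (α i') • ϖ j)
    (ℓ : ℕ) (idx : ℕ → I)
    (q : Aˣ) (t : ℕ → Aˣ) (hq : ∀ a : A, ↑q * a = a * ↑q)
    (β : I → I → ℤ)
    (hrel : ∀ j k : ℕ, 1 ≤ j → j < k → k ≤ ℓ →
      (t j : A) * t k = ↑(q ^ β (idx j) (idx k)) * t k * t j)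
    (k : ℕ) (hk : 1 ≤ k) (hkl : k ≤ ℓ) :
    ∃ N : ℤ,
      (Mmon pair α hc idx t (k - 1) (ϖ (idx k)))⁻¹ *
          (Mmon pair α hc idx t k (ϖ (idx k)))⁻¹ *
          ((Finset.univ.erase (idx k)).toList.map fun j =>
            (Mmon pair α hc idx t k (ϖ j)) ^ (-(pair (hc j) (α (idx k))))).prod
        = q ^ N * t k := by
  obtain ⟨k, rfl⟩ := Nat.exists_eq_add_of_le' hk
  rw [Nat.add_sub_cancel]
  have hqZ : q ∈ Subgroup.center Aˣ := Subgroup.mem_center_iff.mpr fun u => Units.ext (hq u).symm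
  have := Subgroup.normal_zpowers_of_mem_center hqZ
  refine exists_zpow_mul_of_mk_eq hqZ ?_
  set φ := QuotientGroup.mk' (Subgroup.zpowers q)
  have hcomm : (Set.Icc 1 ℓ).Pairwise fun a b => Commute (φ (t a)) (φ (t b)) := by
    intro a ha b hb hab
    wlog hlt : a < b generalizing a b
    · exact (this hb ha hab.symm (hab.symm.lt_of_le (not_lt.mp hlt))).symm
    exact commute_mk'_of_mul_eq_zpow_mul (n := β (idx a) (idx b)) (Units.ext <| by
      rw [Units.val_mul, hrel a b ha.1 hlt hb.2, mul_assoc, Units.val_mul, Units.val_mul])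
  obtain ⟨H, _, ψ, v, hv⟩ := exists_commGroup_lift _ _ hcomm
  have hMmon {k'} (hk' : k' ≤ ℓ) := map_Mmon pair α hc idx φ ψ t v k'
    fun m h1 h2 => hv m ⟨h1, h2.trans hk'⟩
  rw [map_mul, map_mul, map_inv, map_inv, hMmon (k.le_succ.trans hkl), hMmon hkl, map_list_prod,
    List.map_map, ← hv (k + 1) ⟨hk, hkl⟩,
    ← chamber_ansatz_recovery_of_commGroup idx hinv haii hϖ hα v k, map_mul, map_mul, map_inv,
    map_inv, ← prod_map_toList (univ.erase _), map_list_prod, List.map_map]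
  simp only [Function.comp_def, map_zpow, hMmon hkl]
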